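/- arXiv:math/0507043 — 8 statements merged into one kernel-verified Lean document; each statement's English description precedes it below -/
import Mathlib

section
/- For every semifilter F on the natural numbers, there exists a b(F)-scale; that is, a transfinite sequence (f_α : α < b(F)) of increasing functions from ℕ to ℕ such that the family is unbounded with respect to ≤_F, and f_α ≤_F f_β whenever α < β < b(F). Here b(F) is the minimal cardinality of a family in ℕ^ℕ unbounded with respect to ≤_F. -/
open Set Filter Cardinal

/-- A semifilter: a nonempty family of infinite subsets of ℕ closed under
almost-supersets. -/
def SemifilterOn (F : Set (Set ℕ)) : Prop :=
  F.Nonempty ∧ (∀ A ∈ F, A.Infinite) ∧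
    ∀ A ∈ F, ∀ B : Set ℕ, (A \ B).Finite → B ∈ F

/-- `f ≤_F g` : the set where `f ≤ g` belongs to `F`. -/
def LeSF (F : Set (Set ℕ)) (f g : ℕ → ℕ) : Prop := {n | f n ≤ g n} ∈ F

/-- `Y` is bounded with respect to `≤_F`. -/
def BoundedSF (F : Set (Set ℕ)) (Y : Set (ℕ → ℕ)) : Prop :=
  ∃ g : ℕ → ℕ, ∀ f ∈ Y, LeSF F f g

/-- `b(F)` : the minimal cardinality of a `≤_F`-unbounded family in `ℕ^ℕ`. -/
noncomputable def bSF (F : Set (Set ℕ)) : Cardinal :=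
  sInf {c : Cardinal | ∃ Y : Set (ℕ → ℕ), #Y = c ∧ ¬ BoundedSF F Y}

/-- `f ≤* g` : eventual domination. -/
def EvLe (f g : ℕ → ℕ) : Prop := ∀ᶠ n in Filter.atTop, f n ≤ g n

/- ### Auxiliary material -/

lemma semifilter_upward {F : Set (Set ℕ)} (hF : SemifilterOn F) {A B : Set ℕ}
    (hA : A ∈ F) (hAB : A ⊆ B) : B ∈ F :=
  hF.2.2 A hA B (by rw [Set.diff_eq_empty.2 hAB]; exact Set.finite_empty)

open Classical in
/-- A choice of bound for a set of functions (junk if unbounded). -/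
noncomputable def boundOf (F : Set (Set ℕ)) (S : Set (ℕ → ℕ)) : ℕ → ℕ :=
  if h : BoundedSF F S then h.choose else fun _ => 0

lemma boundOf_spec {F : Set (Set ℕ)} {S : Set (ℕ → ℕ)} (h : BoundedSF F S) :
    ∀ f ∈ S, LeSF F f (boundOf F S) := by
  rw [boundOf, dif_pos h]; exact h.choose_spec

/-- The next function in the scale: strictly monotone, pointwise above
`boundOf F S` and above `g`. -/
noncomputable def stepFun (F : Set (Set ℕ)) (S : Set (ℕ → ℕ)) (g : ℕ → ℕ) : ℕ → ℕ :=
  fun n => n + ∑ k ∈ Finset.range (n + 1), (boundOf F S k + g k)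

lemma stepFun_strictMono (F : Set (Set ℕ)) (S : Set (ℕ → ℕ)) (g : ℕ → ℕ) :
    StrictMono (stepFun F S g) := by
  intro m n hmn
  unfold stepFun
  exact Nat.add_lt_add_of_lt_of_le hmn
    (Finset.sum_le_sum_of_subset (Finset.range_subset_range.2 (by omega)))

lemma boundOf_le_stepFun (F : Set (Set ℕ)) (S : Set (ℕ → ℕ)) (g : ℕ → ℕ) (n : ℕ) :
    boundOf F S n ≤ stepFun F S g n := by
  unfold stepFun
  calc boundOf F S n ≤ boundOf F S n + g n := Nat.le_add_right _ _
    _ ≤ ∑ k ∈ Finset.range (n + 1), (boundOf F S k + g k) :=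
        Finset.single_le_sum (f := fun k => boundOf F S k + g k)
          (fun i _ => Nat.zero_le _) (Finset.self_mem_range_succ n)
    _ ≤ _ := Nat.le_add_left _ _

lemma le_stepFun (F : Set (Set ℕ)) (S : Set (ℕ → ℕ)) (g : ℕ → ℕ) (n : ℕ) :
    g n ≤ stepFun F S g n := by
  unfold stepFun
  calc g n ≤ boundOf F S n + g n := Nat.le_add_left _ _
    _ ≤ ∑ k ∈ Finset.range (n + 1), (boundOf F S k + g k) :=
        Finset.single_le_sum (f := fun k => boundOf F S k + g k)
          (fun i _ => Nat.zero_le _) (Finset.self_mem_range_succ n)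
    _ ≤ _ := Nat.le_add_left _ _

/-- every semifilter admits a `b(F)`-scale. -/
theorem stmt_0 (F : Set (Set ℕ)) (hF : SemifilterOn F) :
    ∃ f : {α : Ordinal // α < (bSF F).ord} → (ℕ → ℕ),
      (∀ α, StrictMono (f α)) ∧
      ¬ BoundedSF F (Set.range f) ∧
      ∀ α β, α < β → LeSF F (f α) (f β) := by
  classical
  set o := (bSF F).ord with ho
  -- the defining set of `bSF` is nonempty
  have hne : {c : Cardinal | ∃ Y : Set (ℕ → ℕ), #Y = c ∧ ¬ BoundedSF F Y}.Nonempty := by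
    refine ⟨#(Set.univ : Set (ℕ → ℕ)), Set.univ, rfl, ?_⟩
    rintro ⟨g, hg⟩
    have h1 : LeSF F (fun n => g n + 1) g := hg _ (Set.mem_univ _)
    have h0 : {n | (fun n => g n + 1) n ≤ g n} = (∅ : Set ℕ) := by
      ext n; simp
    rw [LeSF, h0] at h1
    exact (Set.not_infinite.2 Set.finite_empty) (hF.2.1 _ h1)
  have hmem : bSF F ∈ {c : Cardinal | ∃ Y : Set (ℕ → ℕ), #Y = c ∧ ¬ BoundedSF F Y} :=
    csInf_mem hne
  obtain ⟨Y, hYcard, hYunb⟩ := hmem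
  -- sets of small cardinality are bounded
  have hsmall : ∀ S : Set (ℕ → ℕ), #S < bSF F → BoundedSF F S := by
    intro S hS
    by_contra h
    exact absurd (csInf_le' (show #S ∈ {c : Cardinal | ∃ Y : Set (ℕ → ℕ),
      #Y = c ∧ ¬ BoundedSF F Y} from ⟨S, rfl, h⟩)) (not_le.2 hS)
  -- enumerate `Y` by the ordinals below `o`
  have hT : #{α : Ordinal // α < o} = Cardinal.lift.{1} (bSF F) := by
    have h := Ordinal.mk_Iio_ordinal o
    rw [ho, Cardinal.card_ord] at h
    exact h
  have hE : Nonempty ({α : Ordinal // α < o} ≃ Y) := by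
    apply Cardinal.lift_mk_eq'.1
    rw [hT, hYcard]
    simp
  obtain ⟨e⟩ := hE
  set y : {α : Ordinal // α < o} → (ℕ → ℕ) := fun α => (e α : ℕ → ℕ) with hy
  set ybar : Ordinal → (ℕ → ℕ) := fun p => if h : p < o then y ⟨p, h⟩ else fun _ => 0
    with hybar
  -- the transfinite recursion
  set f0 : Ordinal → (ℕ → ℕ) := Ordinal.lt_wf.fix
      (fun p IH => stepFun F {g | ∃ q, ∃ h : q < p, IH q h = g} (ybar p)) with hf0
  have hfix : ∀ p, f0 p = stepFun F {g | ∃ q, ∃ h : q < p, f0 q = g} (ybar p) := by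
    intro p
    rw [hf0]
    exact Ordinal.lt_wf.fix_eq _ p
  set S : Ordinal → Set (ℕ → ℕ) := fun p => {g | ∃ q, ∃ h : q < p, f0 q = g} with hS
  -- each initial segment is bounded
  have hSbdd : ∀ p, p < o → BoundedSF F (S p) := by
    intro p hp
    apply hsmall
    have hsurj : Function.Surjective
        (fun q : {q : Ordinal // q < p} => (⟨f0 q.1, q.1, q.2, rfl⟩ : S p)) := by
      rintro ⟨g, q, hq, rfl⟩
      exact ⟨⟨q, hq⟩, rfl⟩
    have hemb := Function.Embedding.ofSurjective _ hsurj
    have h1 : Cardinal.lift.{1} #(S p) ≤ Cardinal.lift.{0} #{q : Ordinal // q < p} :=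
      Cardinal.lift_mk_le'.2 ⟨hemb⟩
    have h2 : #{q : Ordinal // q < p} = Cardinal.lift.{1} p.card :=
      Ordinal.mk_Iio_ordinal p
    rw [h2] at h1
    have h4 : #(S p) ≤ p.card := by
      rw [← Cardinal.lift_le.{1}]
      simpa using h1
    exact lt_of_le_of_lt h4 (Cardinal.lt_ord.1 hp)
  -- the scale
  refine ⟨fun α => f0 α.1, ?_, ?_, ?_⟩
  · intro α
    show StrictMono (f0 α.1)
    rw [hfix α.1]
    exact stepFun_strictMono F _ _
  · rintro ⟨g, hg⟩
    apply hYunb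
    refine ⟨g, fun t ht => ?_⟩
    obtain ⟨α, hα⟩ : ∃ α : {α : Ordinal // α < o}, y α = t :=
      ⟨e.symm ⟨t, ht⟩, by rw [hy]; simp⟩
    have h5 : ybar α.1 = t := by
      rw [hybar]
      simp only
      rw [dif_pos α.2, Subtype.coe_eta, hα]
    have hpt : ∀ n, t n ≤ f0 α.1 n := by
      intro n
      rw [hfix α.1, ← h5]
      exact le_stepFun F _ _ n
    have hle : LeSF F (f0 α.1) g := hg _ ⟨α, rfl⟩
    refine semifilter_upward hF hle ?_
    intro n hn
    simp only [Set.mem_setOf_eq] at hn ⊢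
    exact le_trans (hpt n) hn
  · rintro ⟨p, hp⟩ ⟨q, hq⟩ hpq
    simp only [Subtype.mk_lt_mk] at hpq
    have hmem : f0 p ∈ S q := ⟨p, hpq, rfl⟩
    have hle := boundOf_spec (hSbdd q hq) _ hmem
    refine semifilter_upward hF hle ?_
    intro n hn
    simp only [Set.mem_setOf_eq] at hn ⊢
    calc f0 p n ≤ boundOf F (S q) n := hn
      _ ≤ f0 q n := by rw [hfix q]; exact boundOf_le_stepFun F _ _ n
end

section
/- If a subset Y of the set of increasing functions ℕ → ℕ is bounded with respect to ≤* when restricted to some infinite set a ⊆ ℕ (i.e., there is g such that for every f ∈ Y, f(n) ≤ g(n) for all but finitely many n ∈ a), then Y is bounded with respect to ≤* on all of ℕ. -/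
open Set Filter Cardinal

/-- if a set of increasing functions is `≤*`-bounded when
restricted to some infinite set `a ⊆ ℕ`, then it is `≤*`-bounded. -/
theorem stmt_4 (Y : Set (ℕ → ℕ)) (hY : ∀ f ∈ Y, StrictMono f)
    (a : Set ℕ) (ha : a.Infinite) (g : ℕ → ℕ)
    (hb : ∀ f ∈ Y, {n ∈ a | ¬ f n ≤ g n}.Finite) :
    ∃ g' : ℕ → ℕ, ∀ f ∈ Y, EvLe f g' := by
  refine ⟨g ∘ Nat.nth (· ∈ a), fun f hf => ?_⟩
  obtain ⟨N, hN⟩ := (hb f hf).bddAbove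
  have hmono := Nat.nth_strictMono (p := (· ∈ a)) ha
  filter_upwards [Filter.eventually_gt_atTop N] with n hn
  have hna : Nat.nth (· ∈ a) n ∈ a := Nat.nth_mem_of_infinite ha n
  have hge : n ≤ Nat.nth (· ∈ a) n := hmono.le_apply
  have hgood : f (Nat.nth (· ∈ a) n) ≤ g (Nat.nth (· ∈ a) n) := by
    by_contra h
    have : Nat.nth (· ∈ a) n ≤ N := hN ⟨hna, h⟩
    omega
  exact le_trans ((hY f hf).monotone hge) hgood
end

section
/- Suppose F ⊆ [ℕ]^∞ is feeble, witnessed by an increasing h : ℕ → ℕ (i.e., every A ∈ F meets [h(n), h(n+1)) for all but finitely many n). If Y is a set of increasing functions ℕ → ℕ that is bounded with respect to ≤_F, then Y is bounded with respect to ≤*. -/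
open Set Filter Cardinal

/-- if `F` is feeble (witnessed by `h`), then any set of
increasing functions bounded with respect to `≤_F` is `≤*`-bounded. -/
theorem stmt_6 (F : Set (Set ℕ)) (hFinf : ∀ A ∈ F, A.Infinite)
    (h : ℕ → ℕ) (hmono : StrictMono h)
    (hfeeble : ∀ A ∈ F, ∀ᶠ n in Filter.atTop,
      (A ∩ Set.Ico (h n) (h (n + 1))).Nonempty)
    (Y : Set (ℕ → ℕ)) (hY : ∀ f ∈ Y, StrictMono f)
    (g : ℕ → ℕ) (hb : ∀ f ∈ Y, LeSF F f g) :
    ∃ g' : ℕ → ℕ, ∀ f ∈ Y, EvLe f g' := by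
  -- monotone majorant of g
  set G : ℕ → ℕ := fun k => (Finset.range (k + 1)).sup g with hG
  have hGmono : Monotone G := fun a b hab =>
    Finset.sup_mono (Finset.range_subset_range.mpr (by omega))
  have hgG : ∀ j k, j ≤ k → g j ≤ G k := fun j k hjk =>
    Finset.le_sup (Finset.mem_range.mpr (by omega))
  refine ⟨fun k => G (h (k + 2)), fun f hf => ?_⟩
  obtain ⟨N, hN⟩ := (hfeeble _ (hb f hf)).exists_forall_of_atTop
  rw [EvLe, Filter.eventually_atTop]
  refine ⟨h N, fun k hk => ?_⟩
  -- find n with h n ≤ k < h (n+1)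
  set P : ℕ → Prop := fun n => h n ≤ k with hP
  have hP0 : P 0 := le_trans (hmono.monotone (Nat.zero_le N)) hk
  set n := Nat.findGreatest P (k + 1) with hn
  have hPn : P n := Nat.findGreatest_spec (Nat.zero_le _) hP0
  have hnk : n ≤ k := le_trans hmono.le_apply hPn
  have hPn1 : ¬ P (n + 1) := Nat.findGreatest_is_greatest (Nat.lt_succ_self n) (by omega)
  have hkn1 : k < h (n + 1) := by simpa [hP] using hPn1
  have hNn : N ≤ n := by
    by_contra hc
    exact absurd (le_trans (hmono.monotone (Nat.succ_le_of_lt (not_le.mp hc))) hk) (not_le.mpr hkn1)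
  obtain ⟨m, hmA, hm1, hm2⟩ := hN (n + 1) (le_trans hNn (Nat.le_succ n))
  have hkm : k < m := lt_of_lt_of_le hkn1 hm1
  calc f k ≤ f m := (hY f hf).monotone hkm.le
    _ ≤ g m := hmA
    _ ≤ G (h (n + 2)) := hgG _ _ hm2.le
    _ ≤ G (h (k + 2)) := hGmono (hmono.monotone (Nat.add_le_add_right hnk 2))
end

section
/- If F is a feeble semifilter, then b(F) = 𝔟, where 𝔟 is the minimal cardinality of a ≤*-unbounded family in ℕ^ℕ and b(F) is the minimal cardinality of a ≤_F-unbounded family. -/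
open Set Filter Cardinal

/-- A feeble family: some increasing `h` is such that every member of `F`
meets `[h(n), h(n+1))` for all but finitely many `n`. -/
def FeebleSF (F : Set (Set ℕ)) : Prop :=
  ∃ h : ℕ → ℕ, StrictMono h ∧ ∀ A ∈ F, ∀ᶠ n in Filter.atTop,
    (A ∩ Set.Ico (h n) (h (n + 1))).Nonempty

/-- The bounding number `𝔟`: least size of a `≤*`-unbounded family. -/
noncomputable def bStar : Cardinal :=
  sInf {c : Cardinal | ∃ Y : Set (ℕ → ℕ), #Y = c ∧ ¬ ∃ g, ∀ f ∈ Y, EvLe f g}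

/-- monotone hull -/
def hullFn (f : ℕ → ℕ) (m : ℕ) : ℕ := (Finset.range (m + 1)).sup f

lemma le_hullFn (f : ℕ → ℕ) {k m : ℕ} (hk : k ≤ m) : f k ≤ hullFn f m :=
  Finset.le_sup (Finset.mem_range.2 (Nat.lt_succ_of_le hk))

lemma hullFn_mono (f : ℕ → ℕ) : Monotone (hullFn f) := fun a b hab =>
  Finset.sup_mono (Finset.range_subset_range.2 (by omega))

/-- for a feeble semifilter `F`, `b(F) = 𝔟`. -/
theorem stmt_7 (F : Set (Set ℕ)) (hF : SemifilterOn F) (hfe : FeebleSF F) :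
    bSF F = bStar := by
  obtain ⟨⟨A0, hA0⟩, hInf, hUp⟩ := hF
  obtain ⟨h, hmono, hmeet⟩ := hfe
  -- eventual domination implies F-domination
  have hEv : ∀ f g : ℕ → ℕ, EvLe f g → LeSF F f g := by
    intro f g hfg
    obtain ⟨N, hN⟩ := Filter.eventually_atTop.1 hfg
    refine hUp A0 hA0 _ (Set.Finite.subset (Set.finite_Iio N) ?_)
    intro n hn
    simp only [Set.mem_diff, Set.mem_setOf_eq] at hn
    by_contra hlt
    exact hn.2 (hN n (by simpa using hlt))
  -- empty set is not in F
  have hempty : (∅ : Set ℕ) ∉ F := fun hmem => (hInf ∅ hmem) Set.finite_empty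
  -- the bStar defining set is nonempty
  have hSstar : {c : Cardinal | ∃ Y : Set (ℕ → ℕ), #Y = c ∧ ¬ ∃ g, ∀ f ∈ Y, EvLe f g}.Nonempty := by
    refine ⟨#(Set.univ : Set (ℕ → ℕ)), Set.univ, rfl, ?_⟩
    rintro ⟨g, hg⟩
    obtain ⟨n, hn⟩ := (hg (fun n => g n + 1) (Set.mem_univ _)).exists
    simp only [] at hn; omega
  -- the bSF defining set is nonempty
  have hSF : {c : Cardinal | ∃ Y : Set (ℕ → ℕ), #Y = c ∧ ¬ BoundedSF F Y}.Nonempty := by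
    refine ⟨#(Set.univ : Set (ℕ → ℕ)), Set.univ, rfl, ?_⟩
    rintro ⟨g, hg⟩
    have := hg (fun n => g n + 1) (Set.mem_univ _)
    have heq : {n | g n + 1 ≤ g n} = (∅ : Set ℕ) := by
      ext n; simp
    rw [LeSF, heq] at this
    exact hempty this
  refine le_antisymm ?_ ?_
  · -- bSF F ≤ bStar
    refine le_csInf hSstar ?_
    rintro c ⟨Y, hc, hY⟩
    -- build a ≤_F-unbounded family from the ≤*-unbounded Y
    set T : (ℕ → ℕ) → (ℕ → ℕ) := fun f k => hullFn f (h (k + 2)) with hT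
    have hunb : ¬ BoundedSF F (T '' Y) := by
      rintro ⟨g, hg⟩
      apply hY
      refine ⟨hullFn g, fun f hf => ?_⟩
      have hAf : {k | T f k ≤ g k} ∈ F := hg (T f) ⟨f, hf, rfl⟩
      obtain ⟨N, hN⟩ := Filter.eventually_atTop.1 (hmeet _ hAf)
      refine Filter.eventually_atTop.2 ⟨h (N + 1), fun m hm => ?_⟩
      set P : ℕ → Prop := fun n => h (n + 1) ≤ m with hP
      have hPN : P N := hm
      have hNle : N ≤ m := le_trans (le_trans hmono.le_apply (le_of_lt (hmono (Nat.lt_succ_self N)))) hm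
      set n := Nat.findGreatest P m with hn
      have hn1 : h (n + 1) ≤ m := Nat.findGreatest_spec hNle hPN
      have hNn : N ≤ n := Nat.le_findGreatest hNle hPN
      have hm2 : m < h (n + 2) := by
        by_contra hcon
        push_neg at hcon
        have h1 : n + 1 ≤ m :=
          le_trans (le_trans (by omega : n + 1 ≤ n + 2) hmono.le_apply) hcon
        exact Nat.findGreatest_is_greatest (Nat.lt_succ_self n) h1 hcon
      obtain ⟨k, hkA, hk1, hk2⟩ := hN n hNn
      have hkn : n ≤ k := le_trans hmono.le_apply hk1
      calc f m ≤ hullFn f (h (n + 2)) := le_hullFn f (le_of_lt hm2)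
        _ ≤ hullFn f (h (k + 2)) := hullFn_mono f (hmono.monotone (by omega))
        _ ≤ g k := hkA
        _ ≤ hullFn g m := le_hullFn g (le_trans (le_of_lt hk2) hn1)
    calc bSF F ≤ #(T '' Y) := csInf_le' ⟨T '' Y, rfl, hunb⟩
      _ ≤ #Y := Cardinal.mk_image_le
      _ = c := hc
  · -- bStar ≤ bSF F
    refine le_csInf hSF ?_
    rintro c ⟨Y, hc, hY⟩
    refine csInf_le' ⟨Y, hc, ?_⟩
    rintro ⟨g, hg⟩
    exact hY ⟨g, fun f hf => hEv f g (hg f hf)⟩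
end

section
/- Every comeager semifilter S is strictly coherent to the semifilter of all infinite subsets of ℕ; in particular, there is an increasing h : ℕ → ℕ such that for every infinite A ⊆ ℕ, the set ⋃{[h(n), h(n+1)) : A ∩ [h(n), h(n+1)) ≠ ∅} belongs to S. -/
open Set Filter Cardinal

/-- The union of all blocks `[h(n), h(n+1))` that `A` meets. -/
def BlocksOf (A : Set ℕ) (h : ℕ → ℕ) : Set ℕ :=
  ⋃ n ∈ {n | (A ∩ Set.Ico (h n) (h (n + 1))).Nonempty},
    Set.Ico (h n) (h (n + 1))

/-- `S` is strictly subcoherent to `F`. -/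
def StrictSubcoherent (S F : Set (Set ℕ)) : Prop :=
  ∃ h : ℕ → ℕ, StrictMono h ∧ ∀ A ∈ S, BlocksOf A h ∈ F

/-- One-step extension lemma for dense open sets in Cantor space. -/
lemma onestep {U : Set (ℕ → Bool)} (hU : IsOpen U) (hd : Dense U)
    (z : ℕ → Bool) (a : ℕ) :
    ∃ b, a ≤ b ∧ ∃ w : ℕ → Bool, (∀ i, i < a → w i = z i) ∧
      ∀ x : ℕ → Bool, (∀ i, i < b → x i = w i) → x ∈ U := by
  have hCopen : IsOpen ((Set.Iio a).pi (fun i => ({z i} : Set Bool))) :=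
    isOpen_set_pi (Set.finite_Iio a) (fun i _ => isOpen_discrete _)
  have hCne : ((Set.Iio a).pi (fun i => ({z i} : Set Bool))).Nonempty :=
    ⟨z, fun i _ => rfl⟩
  obtain ⟨w, hwC, hwU⟩ := hd.inter_open_nonempty _ hCopen hCne
  obtain ⟨I, u, h1, h2⟩ := isOpen_pi_iff.mp hU w hwU
  refine ⟨max a (I.sup id + 1), le_max_left _ _, w, fun i hi => hwC i hi, ?_⟩
  intro x hx
  apply h2
  intro i hi
  have : i ≤ I.sup id := Finset.le_sup (f := id) hi
  have hib : i < max a (I.sup id + 1) := lt_max_of_lt_right (Nat.lt_succ_of_le this)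
  rw [hx i hib]
  exact (h1 i hi).2

/-- Stage lemma: for a dense open `U` and a position `a`, there is `b > a` and a
pattern `y` on `[a,b)` such that any `x` agreeing with `y` on `[a,b)` lies in `U`,
no matter its values elsewhere. -/
lemma stage {U : Set (ℕ → Bool)} (hU : IsOpen U) (hd : Dense U) (a : ℕ) :
    ∃ b, a < b ∧ ∃ y : ℕ → Bool, ∀ x : ℕ → Bool,
      (∀ i, a ≤ i → i < b → x i = y i) → x ∈ U := by
  have key : ∀ l : List (Fin a → Bool), ∃ b, a ≤ b ∧ ∃ y : ℕ → Bool,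
      ∀ s ∈ l, ∀ x : ℕ → Bool, (∀ i (hi : i < a), x i = s ⟨i, hi⟩) →
        (∀ i, a ≤ i → i < b → x i = y i) → x ∈ U := by
    intro l
    induction l with
    | nil => exact ⟨a, le_refl a, fun _ => false, fun s hs => by simp at hs⟩
    | cons s l ih =>
      obtain ⟨b, hab, y, hy⟩ := ih
      obtain ⟨b', hbb', w, hwz, hw⟩ :=
        onestep hU hd (fun i => if h : i < a then s ⟨i, h⟩ else y i) b
      refine ⟨b', le_trans hab hbb', w, ?_⟩
      intro s' hs' x hxs hxw
      rcases List.mem_cons.mp hs' with h | h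
      · subst h
        apply hw
        intro i hi
        by_cases hia : i < a
        · rw [hxs i hia, hwz i (lt_of_lt_of_le hia hab)]
          simp [hia]
        · exact hxw i (le_of_not_gt hia) hi
      · apply hy s' h x hxs
        intro i hia hib
        rw [hxw i hia (lt_of_lt_of_le hib hbb'), hwz i hib]
        simp [not_lt_of_ge hia]
  obtain ⟨b, hab, y, hy⟩ := key (Finset.univ.toList)
  refine ⟨max b (a + 1), lt_max_of_lt_right (Nat.lt_succ_self a), y, ?_⟩
  intro x hx
  exact hy (fun i : Fin a => x i) (Finset.mem_toList.mpr (Finset.mem_univ _)) x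
    (fun i hi => rfl) (fun i hia hib => hx i hia (lt_of_lt_of_le hib (le_max_left b (a+1))))

/-- The blocks of a strictly monotone `h` with `h 0 = 0` cover `ℕ`. -/
lemma block_exists {h : ℕ → ℕ} (hm : StrictMono h) (h0 : h 0 = 0) (m : ℕ) :
    ∃ n, h n ≤ m ∧ m < h (n + 1) := by
  classical
  set n := Nat.findGreatest (fun k => h k ≤ m) m with hn
  have h1 : h n ≤ m := Nat.findGreatest_spec (P := fun k => h k ≤ m) (Nat.zero_le m) (by simp [h0])
  refine ⟨n, h1, ?_⟩
  by_contra hc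
  push_neg at hc
  have hn1 : n + 1 ≤ m := le_trans hm.le_apply hc
  exact Nat.findGreatest_is_greatest (Nat.lt_succ_self n) hn1 hc

/-- Blocks of a strictly monotone `h` are pairwise disjoint. -/
lemma block_unique {h : ℕ → ℕ} (hm : StrictMono h) {m n n' : ℕ}
    (h1 : h n ≤ m) (h2 : m < h (n + 1)) (h3 : h n' ≤ m) (h4 : m < h (n' + 1)) :
    n = n' := by
  rcases lt_trichotomy n n' with hlt | heq | hgt
  · exact absurd (lt_of_le_of_lt h3 h2) (not_lt_of_ge (hm.monotone (Nat.succ_le_of_lt hlt)))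
  · exact heq
  · exact absurd (lt_of_le_of_lt h1 h4) (not_lt_of_ge (hm.monotone (Nat.succ_le_of_lt hgt)))

/-- Main construction: from a residual set `X` in Cantor space, produce a block
structure `h` with patterns `P` such that any `x` agreeing with `P n` on the block
`[h n, h (n+1))` for infinitely many `n` lies in `X`. -/
lemma main_h (X : Set (ℕ → Bool)) (hX : X ∈ residual (ℕ → Bool)) :
    ∃ h : ℕ → ℕ, StrictMono h ∧ h 0 = 0 ∧ ∃ P : ℕ → (ℕ → Bool),
      ∀ x : ℕ → Bool,
        {n | ∀ i, h n ≤ i → i < h (n + 1) → x i = P n i}.Infinite → x ∈ X := by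
  obtain ⟨T, hTo, hTd, hTc, hTsub⟩ := mem_residual_iff.mp hX
  obtain ⟨f, hf⟩ := (hTc.insert Set.univ).exists_eq_range ⟨_, Set.mem_insert _ _⟩
  have hfo : ∀ k, IsOpen (f k) ∧ Dense (f k) := by
    intro k
    have : f k ∈ insert Set.univ T := hf ▸ Set.mem_range_self k
    rcases Set.mem_insert_iff.mp this with h | h
    · rw [h]; exact ⟨isOpen_univ, dense_univ⟩
    · exact ⟨hTo _ h, hTd _ h⟩
  set V : ℕ → Set (ℕ → Bool) := fun n => Nat.rec (f 0) (fun n Vn => Vn ∩ f (n + 1)) n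
    with hVdef
  have hV : ∀ n, IsOpen (V n) ∧ Dense (V n) := by
    intro n
    induction n with
    | zero => exact hfo 0
    | succ n ih =>
      exact ⟨ih.1.inter (hfo (n + 1)).1,
        ih.2.inter_of_isOpen_left (hfo (n + 1)).2 ih.1⟩
  have hVsub : ∀ k n, k ≤ n → V n ⊆ f k := by
    intro k n
    induction n with
    | zero => intro hk; interval_cases k; exact subset_rfl
    | succ n ih =>
      intro hk
      rcases Nat.lt_succ_iff_lt_or_eq.mp (Nat.lt_succ_of_le hk) with h | h
      · exact (Set.inter_subset_left).trans (ih (Nat.lt_succ_iff.mp h))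
      · subst h; exact Set.inter_subset_right
  have hstage : ∀ n a, ∃ b, a < b ∧ ∃ y : ℕ → Bool,
      ∀ x : ℕ → Bool, (∀ i, a ≤ i → i < b → x i = y i) → x ∈ V n :=
    fun n a => stage (hV n).1 (hV n).2 a
  choose B hB Y hY using hstage
  set h : ℕ → ℕ := fun n => Nat.rec 0 (fun n a => B n a) n with hdef
  have hsucc : ∀ n, h (n + 1) = B n (h n) := fun n => rfl
  have hmono : StrictMono h := strictMono_nat_of_lt_succ (fun n => hB n (h n))
  refine ⟨h, hmono, rfl, fun n => Y n (h n), ?_⟩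
  intro x hx
  apply hTsub
  intro t ht
  have : t ∈ Set.range f := hf ▸ Set.mem_insert_of_mem _ ht
  obtain ⟨k, rfl⟩ := this
  obtain ⟨n, hnM, hkn⟩ := hx.exists_gt k
  have hxV : x ∈ V n := hY n (h n) x (fun i h1 h2 => hnM i h1 ((hsucc n) ▸ h2))
  exact hVsub k n (le_of_lt hkn) hxV

/-- every comeager semifilter `S` is strictly coherent to the
semifilter `[ℕ]^∞` of all infinite sets; in particular there is an increasing
`h` such that for every infinite `A`, the union of the blocks that `A` meets
belongs to `S`. -/
theorem stmt_9 (S : Set (Set ℕ)) (hS : SemifilterOn S)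
    (hcomeager : {x : ℕ → Bool | {n | x n = true} ∈ S} ∈
      residual (ℕ → Bool)) :
    StrictSubcoherent S {A : Set ℕ | A.Infinite} ∧
    StrictSubcoherent {A : Set ℕ | A.Infinite} S ∧
    ∃ h : ℕ → ℕ, StrictMono h ∧
      ∀ A : Set ℕ, A.Infinite → BlocksOf A h ∈ S := by
  classical
  obtain ⟨h, hmono, hh0, P, hkey⟩ := main_h _ hcomeager
  -- every number lies in some block, so `A ⊆ BlocksOf A h`
  have hcover : ∀ A : Set ℕ, A ⊆ BlocksOf A h := by
    intro A a ha
    obtain ⟨n, h1, h2⟩ := block_exists hmono hh0 a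
    exact Set.mem_biUnion (⟨a, ha, h1, h2⟩ : (A ∩ Set.Ico (h n) (h (n+1))).Nonempty) ⟨h1, h2⟩
  -- main claim
  have main : ∀ A : Set ℕ, A.Infinite → BlocksOf A h ∈ S := by
    intro A hA
    set M := {n | (A ∩ Set.Ico (h n) (h (n + 1))).Nonempty} with hM
    have hMinf : M.Infinite := by
      intro hfin
      have hsub : A ⊆ ⋃ n ∈ M, Set.Ico (h n) (h (n + 1)) := by
        intro a ha
        obtain ⟨n, h1, h2⟩ := block_exists hmono hh0 a
        exact Set.mem_biUnion (⟨a, ha, h1, h2⟩ : (A ∩ Set.Ico (h n) (h (n+1))).Nonempty) ⟨h1, h2⟩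
      exact hA (Set.Finite.subset (hfin.biUnion (fun n _ => Set.finite_Ico _ _)) hsub)
    set x : ℕ → Bool := fun m =>
      if ∃ n ∈ M, h n ≤ m ∧ m < h (n + 1) ∧ P n m = true then true else false with hx
    have hagree : ∀ n ∈ M, ∀ i, h n ≤ i → i < h (n + 1) → x i = P n i := by
      intro n hn i h1 h2
      by_cases hp : P n i = true
      · rw [hx]; simp only []
        rw [if_pos ⟨n, hn, h1, h2, hp⟩, hp]
      · have hpf : P n i = false := Bool.not_eq_true _ ▸ (by simpa using hp)
        have hneg : ¬ ∃ n' ∈ M, h n' ≤ i ∧ i < h (n' + 1) ∧ P n' i = true := by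
          rintro ⟨n', _, h1', h2', hp'⟩
          exact hp (block_unique hmono h1' h2' h1 h2 ▸ hp')
        rw [hx]; simp only []
        rw [if_neg hneg, hpf]
    have hxS : {m | x m = true} ∈ S :=
      hkey x (hMinf.mono (fun n hn => hagree n hn))
    have hsub : {m | x m = true} ⊆ BlocksOf A h := by
      intro m hm
      simp only [Set.mem_setOf_eq] at hm
      have hex : ∃ n ∈ M, h n ≤ m ∧ m < h (n + 1) ∧ P n m = true := by
        by_contra hc
        rw [hx] at hm; simp only [if_neg hc] at hm
        exact Bool.false_ne_true hm
      obtain ⟨n, hn, h1, h2, _⟩ := hex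
      exact Set.mem_biUnion hn ⟨h1, h2⟩
    exact hS.2.2 _ hxS _ (by rw [Set.diff_eq_empty.mpr hsub]; exact Set.finite_empty)
  refine ⟨⟨h, hmono, ?_⟩, ⟨h, hmono, fun A hA => main A hA⟩, ⟨h, hmono, main⟩⟩
  intro A hA
  exact (hS.2.1 A hA).mono (hcover A)
end

section
/- Let F be a nonmeager semifilter. Then for every f in the increasing functions ℕ → ℕ, the set {g increasing : f ≤_F g} is nonmeager in the space of increasing functions. -/
open Set Filter Cardinal

/-- `F` is nonmeager, viewed as a subset of `2^ℕ`. -/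
def NonmeagerSF (F : Set (Set ℕ)) : Prop :=
  ¬ IsMeagre {x : ℕ → Bool | {n | x n = true} ∈ F}

/-!
Were the set meagre, it would miss every point lying in infinitely many of some dense open sets
`V k`. Cut ℕ into blocks `[n k, n (k + 1))` and attach to each `x : ℕ → Bool` an increasing `g_x`
which on block `k` either extends its values so far into a cylinder inside `V k` (if `x k`) or
dominates `f` (otherwise). The blocks can be chosen independently of `x`, because before block `k`
only the `2 ^ k` patterns `x 0, …, x (k - 1)` can have occurred. As `F` is nonmeagre, some `A ∈ F`
is disjoint from infinitely many blocks (Talagrand). Letting `x k` say that `A` misses block `k`,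
`g_x` lies in infinitely many `V k`, yet `f ≤ g_x` on `A`, hence `f ≤_F g_x`.
-/

open Topology PiNat

abbrev StrictMonoSeq := {g : ℕ → ℕ // StrictMono g}

theorem PiNat.exists_cylinder_subset_of_mem_nhds {E : ℕ → Type*} [∀ n, TopologicalSpace (E n)]
    [∀ n, DiscreteTopology (E n)] {s : Set (∀ n, E n)} {x : ∀ n, E n} (h : s ∈ 𝓝 x) :
    ∃ N, cylinder x N ⊆ s := by
  obtain ⟨_, ⟨y, N, rfl⟩, hx, hs⟩ := (isTopologicalBasis_cylinders E).mem_nhds_iff.1 h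
  exact ⟨N, mem_cylinder_iff_eq.1 hx ▸ hs⟩

theorem PiNat.mem_cylinder_trans {E : ℕ → Type*} {x y z : ∀ n, E n} {N : ℕ}
    (hzy : z ∈ cylinder y N) (hyx : y ∈ cylinder x N) : z ∈ cylinder x N :=
  mem_cylinder_iff_eq.2 ((mem_cylinder_iff_eq.1 hzy).trans (mem_cylinder_iff_eq.1 hyx))

theorem IsMeagre.exists_dense_open_seq {X : Type*} [TopologicalSpace X] {M : Set X}
    (hM : IsMeagre M) :
    ∃ V : ℕ → Set X, (∀ k, IsOpen (V k)) ∧ (∀ k, Dense (V k)) ∧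
      ∀ x, (∃ᶠ k in atTop, x ∈ V k) → x ∉ M := by
  obtain ⟨S, hSo, hSd, hSc, hSM⟩ := mem_residual_iff.1 hM
  obtain ⟨u, hu⟩ := (hSc.insert Set.univ).exists_eq_range (insert_nonempty _ _)
  have hu_mem (i : ℕ) : u i ∈ insert Set.univ S := hu ▸ mem_range_self i
  have huo (i : ℕ) : IsOpen (u i) := (hu_mem i).elim (· ▸ isOpen_univ) (hSo _)
  have hud (i : ℕ) : Dense (u i) := (hu_mem i).elim (· ▸ dense_univ) (hSd _)
  refine ⟨fun k => ⋂₀ (u '' Iic k),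
    fun k => ((finite_Iic k).image u).isOpen_sInter (forall_mem_image.2 fun i _ => huo i),
    fun k => ((finite_Iic k).image u).dense_sInter (forall_mem_image.2 fun i _ => huo i)
      (forall_mem_image.2 fun i _ => hud i),
    fun x hx => hSM fun t ht => ?_⟩
  obtain ⟨m, rfl⟩ : t ∈ range u := hu ▸ mem_insert_of_mem _ ht
  obtain ⟨k, hmk, hk⟩ := hx.forall_exists_of_atTop m
  exact hk _ (mem_image_of_mem u hmk)

theorem isMeagre_setOf_eventually_exists_mem_Ico {n : ℕ → ℕ} (hn : StrictMono n) :
    IsMeagre {x : ℕ → Bool | ∀ᶠ k in atTop, ∃ j ∈ Ico (n k) (n (k + 1)), x j = true} := by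
  set C : ℕ → Set (ℕ → Bool) := fun m =>
    ⋂ k ≥ m, ⋃ j ∈ Finset.Ico (n k) (n (k + 1)), {x | x j = true}
  have hC_closed (m : ℕ) : IsClosed (C m) :=
    isClosed_biInter fun k _ => isClosed_biUnion_finset fun j _ =>
      isClosed_eq (continuous_apply j) continuous_const
  have hC_interior (m : ℕ) : interior (C m) = ∅ := by
    refine eq_empty_of_forall_notMem fun x hx => ?_
    obtain ⟨N, hN⟩ := exists_cylinder_subset_of_mem_nhds (mem_interior_iff_mem_nhds.1 hx)
    -- truncating `x` at `N` stays in the cylinder but meets no block beyond `N`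
    have hy := hN (show (fun i => if i < N then x i else false) ∈ cylinder x N from
      fun i hi => if_pos hi)
    simp only [C, mem_iInter₂, mem_iUnion₂, Finset.mem_Ico, mem_ofPred_eq] at hy
    obtain ⟨j, ⟨hj, -⟩, hyj⟩ := hy (max m N) (le_max_left _ _)
    have : N ≤ j := (le_max_right m N).trans (hn.le_apply.trans hj)
    simp [Nat.not_lt.2 this] at hyj
  refine IsMeagre.mono (fun x hx => ?_) (isMeagre_iUnion fun m =>
    ((hC_closed m).isNowhereDense_iff.2 (hC_interior m)).isMeagre)
  obtain ⟨m, hm⟩ := eventually_atTop.1 hx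
  simpa [C] using ⟨m, hm⟩

theorem NonmeagerSF.exists_mem_frequently_disjoint_Ico {F : Set (Set ℕ)} (hF : NonmeagerSF F)
    {n : ℕ → ℕ} (hn : StrictMono n) :
    ∃ A ∈ F, ∃ᶠ k in atTop, Disjoint (Ico (n k) (n (k + 1))) A := by
  by_contra! h
  refine hF ((isMeagre_setOf_eventually_exists_mem_Ico hn).mono fun x hx => ?_)
  exact (h _ hx).mono fun k hk => not_disjoint_iff.1 hk

theorem StrictMono.exists_mem_Ico {n : ℕ → ℕ} (hn : StrictMono n) {j : ℕ} (hj : n 0 ≤ j) :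
    ∃ k, j ∈ Ico (n k) (n (k + 1)) := by
  have := iUnion_Ico_map_succ_eq_Ici (fun k => hn.monotone (Nat.zero_le k))
    hn.not_bddAbove_range_of_wellFoundedLT
  have hj' : j ∈ ⋃ k, Ico (n k) (n (Order.succ k)) := this ▸ hj
  simpa using hj'

theorem exists_extension_mem_cylinder_subset {U : Set StrictMonoSeq} (hUo : IsOpen U)
    (hUd : Dense U) (g : StrictMonoSeq) (N : ℕ) :
    ∃ h : StrictMonoSeq × ℕ, h.1.1 ∈ cylinder g.1 N ∧ Subtype.val ⁻¹' cylinder h.1.1 h.2 ⊆ U := by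
  obtain ⟨h, hU, hg⟩ := hUd.exists_mem_open
    ((isOpen_cylinder _ g.1 N).preimage continuous_subtype_val) ⟨g, self_mem_cylinder _ _⟩
  obtain ⟨t, ht, rfl⟩ := isOpen_induced_iff.1 hUo
  obtain ⟨N', hN'⟩ := exists_cylinder_subset_of_mem_nhds (ht.mem_nhds hU)
  exact ⟨(h, N'), hg, preimage_mono hN'⟩

def extendDominating (f g : StrictMonoSeq) (N : ℕ) : StrictMonoSeq :=
  ⟨fun j => if j < N then g.1 j else f.1 j + g.1 (N - 1) + 1, by
    intro i j hij
    dsimp only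
    split_ifs with hi hj hj
    · exact g.2 hij
    · have := g.2.monotone (show i ≤ N - 1 by omega)
      omega
    · omega
    · have := f.2 hij
      omega⟩

theorem extendDominating_mem_cylinder (f g : StrictMonoSeq) (N : ℕ) :
    (extendDominating f g N).1 ∈ cylinder g.1 N :=
  fun _ hj => if_pos hj

theorem le_extendDominating (f g : StrictMonoSeq) {N j : ℕ} (hj : N ≤ j) :
    f.1 j ≤ (extendDominating f g N).1 j := by
  simp only [extendDominating, if_neg (Nat.not_lt.2 hj)]
  omega

namespace BlockConstruction

variable (f : StrictMonoSeq) (e : ℕ → StrictMonoSeq → ℕ → StrictMonoSeq × ℕ)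

/-- `(stage k).2 s` is the approximation for the pattern `s` of the first `k` blocks; its values
below the block end `(stage k).1` are final. -/
def stage : (k : ℕ) → ℕ × ((Fin k → Bool) → StrictMonoSeq)
  | 0 => (0, fun _ => f)
  | k + 1 =>
    (max ((stage k).1 + 1) (Finset.univ.sup fun s => (e k ((stage k).2 s) (stage k).1).2),
      fun s => if s (Fin.last k) then (e k ((stage k).2 (Fin.init s)) (stage k).1).1
        else extendDominating f ((stage k).2 (Fin.init s)) (stage k).1)

def blockEnd (k : ℕ) : ℕ := (stage f e k).1

def approx (x : ℕ → Bool) (k : ℕ) : StrictMonoSeq := (stage f e k).2 fun i => x i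

def limit (x : ℕ → Bool) (j : ℕ) : ℕ := (approx f e x (j + 1)).1 j

theorem blockEnd_zero : blockEnd f e 0 = 0 := rfl

theorem strictMono_blockEnd : StrictMono (blockEnd f e) :=
  strictMono_nat_of_lt_succ fun _ => (Nat.lt_succ_self _).trans_le (le_max_left _ _)

theorem approx_succ (x : ℕ → Bool) (k : ℕ) :
    approx f e x (k + 1) =
      if x k then (e k (approx f e x k) (blockEnd f e k)).1
      else extendDominating f (approx f e x k) (blockEnd f e k) := rfl

theorem extension_length_le_blockEnd_succ (x : ℕ → Bool) (k : ℕ) :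
    (e k (approx f e x k) (blockEnd f e k)).2 ≤ blockEnd f e (k + 1) :=
  le_trans (Finset.le_sup (f := fun s => (e k ((stage f e k).2 s) (stage f e k).1).2)
    (Finset.mem_univ fun i : Fin k => x i)) (le_max_right _ _)

variable {e}

theorem approx_mem_cylinder (he : ∀ k g N, (e k g N).1.1 ∈ cylinder g.1 N) (x : ℕ → Bool)
    {k l : ℕ} (hkl : k ≤ l) :
    (approx f e x l).1 ∈ cylinder (approx f e x k).1 (blockEnd f e k) := by
  induction l, hkl using Nat.le_induction with
  | base => exact self_mem_cylinder _ _
  | succ l hkl ih =>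
    refine mem_cylinder_trans (cylinder_anti _ ((strictMono_blockEnd f e).monotone hkl) ?_) ih
    rw [approx_succ]
    split_ifs
    · exact he _ _ _
    · exact extendDominating_mem_cylinder _ _ _

theorem limit_mem_cylinder (he : ∀ k g N, (e k g N).1.1 ∈ cylinder g.1 N) (x : ℕ → Bool)
    (k : ℕ) :
    limit f e x ∈ cylinder (approx f e x k).1 (blockEnd f e k) := by
  intro j hj
  rcases le_total k (j + 1) with hk | hk
  · exact approx_mem_cylinder f he x hk j hj
  · exact (approx_mem_cylinder f he x hk j ((strictMono_blockEnd f e).le_apply)).symm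

theorem strictMono_limit (he : ∀ k g N, (e k g N).1.1 ∈ cylinder g.1 N) (x : ℕ → Bool) :
    StrictMono (limit f e x) := by
  intro i j hij
  have hj : j < blockEnd f e (j + 1) := (strictMono_blockEnd f e).le_apply
  rw [limit_mem_cylinder f he x (j + 1) i (hij.trans hj), limit_mem_cylinder f he x (j + 1) j hj]
  exact (approx f e x (j + 1)).2 hij

end BlockConstruction

open BlockConstruction in
theorem exists_blocks_forall_exists_mem_or_dominating (f : StrictMonoSeq)
    {V : ℕ → Set StrictMonoSeq} (hVo : ∀ k, IsOpen (V k)) (hVd : ∀ k, Dense (V k)) :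
    ∃ n : ℕ → ℕ, StrictMono n ∧ n 0 = 0 ∧ ∀ x : ℕ → Bool, ∃ g : StrictMonoSeq,
      (∀ k, x k = true → g ∈ V k) ∧
        ∀ k, x k = false → ∀ j ∈ Ico (n k) (n (k + 1)), f.1 j ≤ g.1 j := by
  choose e he hV using fun k => exists_extension_mem_cylinder_subset (hVo k) (hVd k)
  refine ⟨blockEnd f e, strictMono_blockEnd f e, blockEnd_zero f e, fun x =>
    ⟨⟨limit f e x, strictMono_limit f he x⟩, fun k hx => hV k (approx f e x k) (blockEnd f e k) ?_,
      fun k hx j hj => ?_⟩⟩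
  · have := limit_mem_cylinder f he x (k + 1)
    rw [approx_succ, if_pos hx] at this
    exact cylinder_anti _ (extension_length_le_blockEnd_succ f e x k) this
  · change f.1 j ≤ limit f e x j
    rw [limit_mem_cylinder f he x (k + 1) j hj.2, approx_succ, if_neg (by simp [hx])]
    exact le_extendDominating f _ hj.1

/-- for a nonmeager semifilter `F` and any increasing `f`, the
set of increasing `g` with `f ≤_F g` is nonmeager in the space of increasing
functions. -/
theorem stmt_13 (F : Set (Set ℕ)) (hF : SemifilterOn F)
    (hnm : NonmeagerSF F) (f : ℕ → ℕ) (hf : StrictMono f) :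
    ¬ IsMeagre {g : {g : ℕ → ℕ // StrictMono g} | LeSF F f g.val} := by
  classical
  intro hM
  obtain ⟨V, hVo, hVd, hV⟩ := hM.exists_dense_open_seq
  obtain ⟨n, hn, hn0, hext⟩ := exists_blocks_forall_exists_mem_or_dominating ⟨f, hf⟩ hVo hVd
  obtain ⟨A, hA, hAn⟩ := hnm.exists_mem_frequently_disjoint_Ico hn
  obtain ⟨g, hgV, hfg⟩ := hext fun k => decide (Disjoint (Ico (n k) (n (k + 1))) A)
  refine hV g (hAn.mono fun k hk => hgV k (decide_eq_true hk)) (hF.2.2 A hA _ ?_)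
  suffices A ⊆ {j | f j ≤ g.1 j} by simp [sdiff_eq_empty.2 this]
  intro j hj
  obtain ⟨k, hk⟩ := hn.exists_mem_Ico (hn0 ▸ Nat.zero_le j)
  exact hfg k (decide_eq_false fun hd => disjoint_left.1 hd hk hj) j hk
end

section
/- The semifilter of all infinite subsets of ℕ is nonmeager-bounding: for every family Y ⊆ ℕ^ℕ with |Y| < 𝔡, the set of increasing g such that {n : f(n) ≤ g(n)} is infinite for every f ∈ Y, is nonmeager in the space of increasing functions. -/
open Set Filter Cardinal

/-- The dominating number `𝔡`. -/
noncomputable def dNum : Cardinal :=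
  sInf {c : Cardinal | ∃ D : Set (ℕ → ℕ), #D = c ∧
    ∀ g : ℕ → ℕ, ∃ f ∈ D, EvLe g f}

abbrev MS := {g : ℕ → ℕ // StrictMono g}

lemma nwd_union {X : Type*} [TopologicalSpace X] {s t : Set X}
    (hs : IsNowhereDense s) (ht : IsNowhereDense t) : IsNowhereDense (s ∪ t) := by
  have h1 : interior (closure s ∪ closure t) = ∅ := by
    by_contra h
    have hU : IsOpen (interior (closure s ∪ closure t) \ closure s) :=
      IsOpen.sdiff isOpen_interior isClosed_closure
    have hsub : interior (closure s ∪ closure t) \ closure s ⊆ closure t := by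
      rintro x ⟨hx1, hx2⟩
      rcases interior_subset hx1 with h | h
      · exact absurd h hx2
      · exact h
    have he : interior (closure s ∪ closure t) \ closure s = ∅ := by
      have := interior_maximal hsub hU
      rw [ht] at this
      exact eq_empty_of_subset_empty this
    have : interior (closure s ∪ closure t) ⊆ closure s := by
      intro x hx
      by_contra hxs
      have hxm : x ∈ interior (closure s ∪ closure t) \ closure s := ⟨hx, hxs⟩
      rw [he] at hxm
      exact notMem_empty x hxm
    have := interior_maximal this isOpen_interior
    rw [hs] at this
    exact h (eq_empty_of_subset_empty this)
  rw [IsNowhereDense, closure_union]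
  exact h1

lemma open_basic {U : Set MS} (hU : IsOpen U) {g : MS} (hg : g ∈ U) :
    ∃ n : ℕ, ∀ h : MS, (∀ i < n, h.1 i = g.1 i) → h ∈ U := by
  rw [isOpen_induced_iff] at hU
  obtain ⟨V, hV, rfl⟩ := hU
  obtain ⟨I, u, hu, hsub⟩ := isOpen_pi_iff.1 hV g.1 hg
  refine ⟨I.sup id + 1, fun h hh => ?_⟩
  refine hsub fun i hi => ?_
  rw [hh i (Nat.lt_succ_of_le (Finset.le_sup (f := id) hi))]
  exact (hu i hi).2

lemma cyl_open (z : ℕ → ℕ) (n : ℕ) : IsOpen {h : MS | ∀ i < n, h.1 i = z i} := by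
  have : {h : MS | ∀ i < n, h.1 i = z i} =
      ⋂ i ∈ Finset.range n, {h : MS | h.1 i = z i} := by
    ext h; simp [Nat.lt_succ_iff]
  rw [this]
  refine isOpen_biInter_finset fun i _ => ?_
  have hc : Continuous (fun h : MS => h.1 i) := (continuous_apply i).comp continuous_subtype_val
  have : {h : MS | h.1 i = z i} = (fun h : MS => h.1 i) ⁻¹' ({z i} : Set ℕ) := rfl
  rw [this]
  exact (isOpen_discrete _).preimage hc

/-- single dodge -/
lemma dodge {G : Set MS} (hG : IsNowhereDense G) (z : MS) (n : ℕ) :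
    ∃ (m : ℕ) (w : MS), n < m ∧ (∀ i < n, w.1 i = z.1 i) ∧
      ∀ h : MS, (∀ i < m, h.1 i = w.1 i) → h ∉ G := by
  have hO : IsOpen {h : MS | ∀ i < n, h.1 i = z.1 i} := cyl_open z.1 n
  have hzO : z ∈ {h : MS | ∀ i < n, h.1 i = z.1 i} := fun i _ => rfl
  have hnot : ¬ {h : MS | ∀ i < n, h.1 i = z.1 i} ⊆ closure G := by
    intro hsub
    have := interior_maximal hsub hO
    rw [hG] at this
    exact absurd (this hzO) (notMem_empty z)
  obtain ⟨g₀, hg₀O, hg₀G⟩ := not_subset.1 hnot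
  obtain ⟨n₁, hn₁⟩ := open_basic (isOpen_compl_iff.2 isClosed_closure) (hg₀G : g₀ ∈ (closure G)ᶜ)
  refine ⟨max n₁ (n + 1), g₀, lt_of_lt_of_le (Nat.lt_succ_self n) (le_max_right _ _),
    hg₀O, fun h hh hhG => ?_⟩
  exact hn₁ h (fun i hi => hh i (lt_of_lt_of_le hi (le_max_left _ _))) (subset_closure hhG)
lemma mdodge_aux {G : Set MS} (hG : IsNowhereDense G) (n B : ℕ)
    (s : Finset (Fin n → Fin B)) :
    ∀ (m : ℕ) (z : MS), n < m → B ≤ z.1 n →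
    ∃ (m' : ℕ) (z' : MS), m ≤ m' ∧ (∀ i < m, z'.1 i = z.1 i) ∧
      ∀ v ∈ s, StrictMono (fun i : Fin n => (v i : ℕ)) →
        ∀ g : MS, (∀ i : Fin n, g.1 i = (v i : ℕ)) →
          (∀ i, n ≤ i → i < m' → g.1 i = z'.1 i) → g ∉ G := by
  classical
  induction s using Finset.induction_on with
  | empty =>
    intro m z hm _
    exact ⟨m, z, le_refl m, fun i _ => rfl, fun v hv => absurd hv (Finset.notMem_empty v)⟩
  | @insert a s ha IH =>
    intro m z hm hzB
    obtain ⟨m₁, z₁, hm₁, hz₁, hP₁⟩ := IH m z hm hzB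
    have hnm₁ : n < m₁ := lt_of_lt_of_le hm hm₁
    have hz₁n : z₁.1 n = z.1 n := hz₁ n hm
    by_cases hsm : StrictMono (fun i : Fin n => (a i : ℕ))
    · -- build hybrid
      have hhv : StrictMono (fun i => if h : i < n then (a ⟨i, h⟩ : ℕ) else z₁.1 i) := by
        apply strictMono_nat_of_lt_succ
        intro i
        by_cases h1 : i + 1 < n
        · have h0 : i < n := Nat.lt_of_succ_lt h1
          rw [dif_pos h0, dif_pos h1]
          exact hsm (show (⟨i, h0⟩ : Fin n) < ⟨i + 1, h1⟩ from Nat.lt_succ_self i)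
        · by_cases h0 : i < n
          · rw [dif_pos h0, dif_neg h1]
            calc (a ⟨i, h0⟩ : ℕ) < B := (a ⟨i, h0⟩).2
            _ ≤ z₁.1 n := hz₁n ▸ hzB
            _ ≤ z₁.1 (i + 1) := z₁.2.monotone (Nat.le_of_not_lt h1)
          · rw [dif_neg h0, dif_neg h1]
            exact z₁.2 (Nat.lt_succ_self i)
      set hv : MS := ⟨fun i => if h : i < n then (a ⟨i, h⟩ : ℕ) else z₁.1 i, hhv⟩ with hhvdef
      obtain ⟨m₂, w, hm₂, hw, hwG⟩ := dodge hG hv m₁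
      -- glue
      have hglue : StrictMono (fun i => if i < n then z₁.1 i else w.1 i) := by
        apply strictMono_nat_of_lt_succ
        intro i
        by_cases h1 : i + 1 < n
        · rw [if_pos (Nat.lt_of_succ_lt h1), if_pos h1]
          exact z₁.2 (Nat.lt_succ_self i)
        · by_cases h0 : i < n
          · rw [if_pos h0, if_neg h1]
            have hn1 : i + 1 ≤ n := h0
            have hlt : i + 1 < m₁ := lt_of_le_of_lt hn1 hnm₁
            rw [hw (i+1) hlt]
            show z₁.1 i < hv.1 (i + 1)
            rw [hhvdef]
            show z₁.1 i < if h : i + 1 < n then (a ⟨i+1, h⟩ : ℕ) else z₁.1 (i+1)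
            rw [dif_neg h1]
            exact z₁.2 (Nat.lt_succ_self i)
          · rw [if_neg h0, if_neg h1]
            exact w.2 (Nat.lt_succ_self i)
      refine ⟨m₂, ⟨fun i => if i < n then z₁.1 i else w.1 i, hglue⟩,
        le_of_lt (lt_of_le_of_lt hm₁ hm₂), ?_, ?_⟩
      · -- agrees with z below m
        intro i him
        show (if i < n then z₁.1 i else w.1 i) = z.1 i
        by_cases h0 : i < n
        · rw [if_pos h0]; exact hz₁ i him
        · rw [if_neg h0]
          have hiltm₁ : i < m₁ := lt_of_lt_of_le him hm₁
          rw [hw i hiltm₁]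
          show hv.1 i = z.1 i
          rw [hhvdef]
          show (if h : i < n then (a ⟨i, h⟩ : ℕ) else z₁.1 i) = z.1 i
          rw [dif_neg h0]
          exact hz₁ i him
      · intro v hv' hvs g hgv hgz
        rcases Finset.mem_insert.1 hv' with rfl | hv''
        · -- new prefix: g lies in the dodged cylinder of w
          refine hwG g (fun i hi => ?_)
          by_cases h0 : i < n
          · have h1 : i < m₁ := lt_of_lt_of_le (lt_of_lt_of_le h0 (le_of_lt hnm₁)) (le_refl m₁)
            rw [hw i h1]
            show g.1 i = hv.1 i
            rw [hhvdef]
            show g.1 i = if h : i < n then (v ⟨i, h⟩ : ℕ) else z₁.1 i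
            rw [dif_pos h0]
            exact hgv ⟨i, h0⟩
          · have h3 := hgz i (Nat.le_of_not_lt h0) hi
            rw [h3]
            show (if i < n then z₁.1 i else w.1 i) = w.1 i
            rw [if_neg h0]
        · -- old prefix
          refine hP₁ v hv'' hvs g hgv (fun i hni him₁ => ?_)
          have h2 : i < m₂ := lt_of_lt_of_le him₁ (le_of_lt hm₂)
          rw [hgz i hni h2]
          show (if i < n then z₁.1 i else w.1 i) = z₁.1 i
          rw [if_neg (Nat.not_lt.2 hni), hw i him₁]
          show (if h : i < n then (a ⟨i, h⟩ : ℕ) else z₁.1 i) = z₁.1 i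
          rw [dif_neg (Nat.not_lt.2 hni)]
    · refine ⟨m₁, z₁, hm₁, hz₁, fun v hv hvs => ?_⟩
      rcases Finset.mem_insert.1 hv with rfl | hv'
      · exact absurd hvs hsm
      · exact hP₁ v hv' hvs

/-- multi dodge -/
lemma mdodge {G : Set MS} (hG : IsNowhereDense G) (n B : ℕ) (hnB : n ≤ B) :
    ∃ (m : ℕ) (z' : MS), n < m ∧ z'.1 n = B ∧
      ∀ g : MS, (∀ i, n ≤ i → i < m → g.1 i = z'.1 i) →
        (∀ i < n, g.1 i < B) → g ∉ G := by
  classical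
  have hzsm : StrictMono (fun i => i + (B - n)) := fun x y h => Nat.add_lt_add_right h _
  have hzn : (fun i => i + (B - n)) n = B := by show n + (B - n) = B; omega
  obtain ⟨m', z', hm', hagree, hP⟩ := mdodge_aux hG n B Finset.univ (n + 1)
    ⟨fun i => i + (B - n), hzsm⟩ (Nat.lt_succ_self n) (le_of_eq hzn.symm)
  have hz'n : z'.1 n = B := by rw [hagree n (Nat.lt_succ_self n)]; exact hzn
  refine ⟨m', z', lt_of_lt_of_le (Nat.lt_succ_self n) hm', hz'n, fun g hg hbd => ?_⟩
  have hvsm : StrictMono (fun i : Fin n => ((fun j : Fin n => (⟨g.1 j, hbd j j.2⟩ : Fin B)) i : ℕ)) := by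
    intro x y h
    exact g.2 h
  exact hP (fun j : Fin n => (⟨g.1 j, hbd j j.2⟩ : Fin B)) (Finset.mem_univ _) hvsm g
    (fun i => rfl) hg
section Stage1

variable (Gk : ℕ → Set MS) (hGk : ∀ k, IsNowhereDense (Gk k))

def Bd (k : ℕ) (p : ℕ × MS) : ℕ :=
  (if p.1 = 0 then 0 else p.2.1 (p.1 - 1) + 1) + p.1 + k + 2

lemma Bd_ge (k : ℕ) (p : ℕ × MS) : p.1 ≤ Bd k p := by
  unfold Bd; omega

noncomputable def stStep (k : ℕ) (p : ℕ × MS) : ℕ × MS :=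
  ⟨(mdodge (hGk k) p.1 (Bd k p) (Bd_ge k p)).choose,
   (mdodge (hGk k) p.1 (Bd k p) (Bd_ge k p)).choose_spec.choose⟩

lemma stStep_spec (k : ℕ) (p : ℕ × MS) :
    p.1 < (stStep Gk hGk k p).1 ∧
    (stStep Gk hGk k p).2.1 p.1 = Bd k p ∧
    ∀ g : MS, (∀ i, p.1 ≤ i → i < (stStep Gk hGk k p).1 →
        g.1 i = (stStep Gk hGk k p).2.1 i) →
      (∀ i < p.1, g.1 i < Bd k p) → g ∉ Gk k :=
  (mdodge (hGk k) p.1 (Bd k p) (Bd_ge k p)).choose_spec.choose_spec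

noncomputable def st : ℕ → ℕ × MS
  | 0 => (0, ⟨fun i => i, strictMono_id⟩)
  | (k+1) => stStep Gk hGk k (st k)

lemma st_zero : (st Gk hGk 0).1 = 0 := rfl

lemma st_succ (k : ℕ) : st Gk hGk (k+1) = stStep Gk hGk k (st Gk hGk k) := rfl

lemma st_lt (k : ℕ) : (st Gk hGk k).1 < (st Gk hGk (k+1)).1 := by
  rw [st_succ]; exact (stStep_spec Gk hGk k (st Gk hGk k)).1

lemma st_mono : StrictMono (fun k => (st Gk hGk k).1) :=
  strictMono_nat_of_lt_succ (st_lt Gk hGk)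

lemma st_self_le (k : ℕ) : k ≤ (st Gk hGk k).1 := by
  induction k with
  | zero => exact Nat.zero_le _
  | succ k ih => exact Nat.succ_le_of_lt (lt_of_le_of_lt ih (st_lt Gk hGk k))

/-- value of the scale at block start -/
lemma st_val (k : ℕ) :
    (st Gk hGk (k+1)).2.1 ((st Gk hGk k).1) = Bd k (st Gk hGk k) := by
  rw [st_succ]; exact (stStep_spec Gk hGk k (st Gk hGk k)).2.1

lemma Bd_lower (k : ℕ) : (st Gk hGk k).1 + k + 2 ≤ Bd k (st Gk hGk k) := by
  unfold Bd; omega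

lemma st_dodge (k : ℕ) (g : MS)
    (hcopy : ∀ i, (st Gk hGk k).1 ≤ i → i < (st Gk hGk (k+1)).1 →
      g.1 i = (st Gk hGk (k+1)).2.1 i)
    (hbd : ∀ i < (st Gk hGk k).1, g.1 i < Bd k (st Gk hGk k)) : g ∉ Gk k := by
  have := (stStep_spec Gk hGk k (st Gk hGk k)).2.2 g
  rw [← st_succ] at this
  exact this hcopy hbd

end Stage1
lemma lemA (Y : Set (ℕ → ℕ)) (hY : #Y < dNum) (D : (ℕ → ℕ) → ℕ → ℕ)
    (hD : ∀ f ∈ Y, Monotone (D f)) :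
    ∃ u : ℕ → ℕ, StrictMono u ∧ ∀ f ∈ Y, ∀ K, ∃ k, K ≤ k ∧ D f (u k) ≤ u (k+1) := by
  by_contra hcon
  push_neg at hcon
  have hdom : ∀ h : ℕ → ℕ, ∃ d ∈ (fun f => D f ∘ D f) '' Y, EvLe h d := by
    intro h
    set H : ℕ → ℕ := fun m => (Finset.range (m+1)).sup h + m + 1 with hH
    have hHmono : Monotone H := by
      intro a b hab
      have : (Finset.range (a+1)).sup h ≤ (Finset.range (b+1)).sup h :=
        Finset.sup_mono (Finset.range_subset_range.2 (by omega))
      simp only [hH]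
      omega
    set u : ℕ → ℕ := fun k => Nat.rec 0 (fun _ p => H p) k with hu
    have hus : ∀ k, u (k+1) = H (u k) := fun k => rfl
    have husm : StrictMono u := by
      apply strictMono_nat_of_lt_succ
      intro k
      rw [hus k]
      simp only [hH]
      omega
    have hule : ∀ n, n ≤ u n := fun n => husm.le_apply
    obtain ⟨f, hf, K, hK⟩ := hcon u husm
    refine ⟨D f ∘ D f, mem_image_of_mem _ hf, ?_⟩
    rw [EvLe, eventually_atTop]
    refine ⟨u K, fun m hm => ?_⟩
    classical
    have hKm : K ≤ m := le_trans (hule K) hm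
    have hk1 : u (Nat.findGreatest (fun j => u j ≤ m) m) ≤ m :=
      Nat.findGreatest_spec (P := fun j => u j ≤ m) (n := m) (m := K) hKm hm
    have hkK : K ≤ Nat.findGreatest (fun j => u j ≤ m) m := Nat.le_findGreatest (P := fun j => u j ≤ m) hKm hm
    have hk2 : m < u (Nat.findGreatest (fun j => u j ≤ m) m + 1) := by
      by_cases h2 : Nat.findGreatest (fun j => u j ≤ m) m + 1 ≤ m
      · exact Nat.lt_of_not_le (Nat.findGreatest_is_greatest (P := fun j => u j ≤ m) (Nat.lt_succ_self _) h2)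
      · exact lt_of_lt_of_le (Nat.lt_of_not_le h2) (hule _)
    set k := Nat.findGreatest (fun j => u j ≤ m) m
    have c1 : h m < H (u (k+1)) := by
      have h3 : h m ≤ (Finset.range (u (k+1) + 1)).sup h :=
        Finset.le_sup (Finset.mem_range.2 (by omega))
      simp only [hH]
      omega
    have c3 : u (k+2) < D f (u (k+1)) := hK (k+1) (by omega)
    have c4 : D f (u (k+1)) ≤ D f (D f (u k)) := hD f hf (le_of_lt (hK k hkK))
    have c5 : D f (D f (u k)) ≤ D f (D f m) := hD f hf (hD f hf hk1)
    have c2 : u (k+2) = H (u (k+1)) := hus (k+1)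
    show h m ≤ D f (D f m)
    omega
  have h1 : dNum ≤ #((fun f => D f ∘ D f) '' Y) :=
    csInf_le' ⟨(fun f => D f ∘ D f) '' Y, rfl, hdom⟩
  have h2 : #((fun f => D f ∘ D f) '' Y) ≤ #Y := Cardinal.mk_image_le
  exact absurd (lt_of_le_of_lt (le_trans h1 h2) hY) (lt_irrefl _)
/-- the semifilter of all infinite sets is nonmeager-bounding:
for every `Y ⊆ ℕ^ℕ` with `|Y| < 𝔡`, the set of increasing `g` such that
`{n : f(n) ≤ g(n)}` is infinite for all `f ∈ Y` is nonmeager. -/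
theorem stmt_15 (Y : Set (ℕ → ℕ)) (hY : #Y < dNum) :
    ¬ IsMeagre {g : {g : ℕ → ℕ // StrictMono g} |
        ∀ f ∈ Y, {n | f n ≤ g.val n}.Infinite} := by
  classical
  intro hM
  rw [isMeagre_iff_countable_union_isNowhereDense] at hM
  obtain ⟨Sfam, hSnwd, hScnt, hSsub⟩ := hM
  obtain ⟨A, hA⟩ := (hScnt.insert ∅).exists_eq_range ⟨∅, mem_insert _ _⟩
  have hAnwd : ∀ k, IsNowhereDense (A k) := by
    intro k
    have hmem : A k ∈ insert ∅ Sfam := hA ▸ mem_range_self k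
    rcases mem_insert_iff.1 hmem with h | h
    · rw [h]; exact isNowhereDense_empty
    · exact hSnwd _ h
  have hsubA : {g : MS | ∀ f ∈ Y, {n | f n ≤ g.val n}.Infinite} ⊆ ⋃ k, A k := by
    intro x hx
    obtain ⟨t, ht, hxt⟩ := hSsub hx
    have : t ∈ insert ∅ Sfam := mem_insert_of_mem _ ht
    rw [hA] at this
    obtain ⟨k, hk⟩ := this
    exact mem_iUnion.2 ⟨k, hk ▸ hxt⟩
  -- increasing unions
  let Gk : ℕ → Set MS := fun k => Nat.rec (A 0) (fun k' p => p ∪ A (k'+1)) k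
  have hGk : ∀ k, IsNowhereDense (Gk k) := by
    intro k
    induction k with
    | zero => exact hAnwd 0
    | succ k ih => exact nwd_union ih (hAnwd (k+1))
  have hGmono : ∀ l k, l ≤ k → A l ⊆ Gk k := by
    intro l k hlk
    induction k with
    | zero =>
      have : l = 0 := Nat.le_zero.1 hlk
      subst this
      exact subset_refl _
    | succ k ih =>
      rcases Nat.lt_or_ge l (k+1) with h | h
      · exact subset_trans (ih (Nat.lt_succ_iff.1 h)) (subset_union_left)
      · have : l = k + 1 := le_antisymm hlk h
        subst this
        exact subset_union_right
  -- the dodging scale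
  let nf : ℕ → ℕ := fun k => (st Gk hGk k).1
  let qf : ℕ → MS := fun k => (st Gk hGk k).2
  have hnsm : StrictMono nf := st_mono Gk hGk
  have hnself : ∀ k, k ≤ nf k := st_self_le Gk hGk
  let Bv : ℕ → ℕ := fun k => (qf (k+1)).1 (nf k)
  have hBveq : ∀ k, Bv k = Bd k (st Gk hGk k) := fun k => st_val Gk hGk k
  have hBv : ∀ k, nf k + k + 2 ≤ Bv k := by
    intro k
    rw [hBveq k]
    exact Bd_lower Gk hGk k
  have hdodge : ∀ k (g : MS),
      (∀ i, nf k ≤ i → i < nf (k+1) → g.1 i = (qf (k+1)).1 i) →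
      (∀ i < nf k, g.1 i < Bv k) → g ∉ Gk k := by
    intro k g h1 h2
    refine st_dodge Gk hGk k g h1 ?_
    intro i hi
    have := h2 i hi
    rwa [hBveq k] at this
  -- J and Xi
  have exJ : ∀ v : ℕ, ∃ jj, v + 1 ≤ nf jj ∧ v + nf jj < Bv jj := by
    intro v
    refine ⟨v + 1, hnself (v+1), ?_⟩
    have := hBv (v+1)
    omega
  let Jf : ℕ → ℕ := fun v => Nat.find (exJ v)
  have Jf_spec : ∀ v, v + 1 ≤ nf (Jf v) ∧ v + nf (Jf v) < Bv (Jf v) :=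
    fun v => Nat.find_spec (exJ v)
  let Xi : ℕ → ℕ := fun v => nf (Jf v + 1)
  let XiM : ℕ → ℕ := fun r => (Finset.range (r+1)).sup Xi
  have XiM_ge : ∀ v r, v ≤ r → Xi v ≤ XiM r :=
    fun v r h => Finset.le_sup (Finset.mem_range.2 (by omega))
  let fplus : (ℕ → ℕ) → ℕ → ℕ := fun f t => (Finset.range (t+1)).sup f
  have fplus_ge : ∀ f j t, j ≤ t → f j ≤ fplus f t :=
    fun f j t h => Finset.le_sup (Finset.mem_range.2 (by omega))
  let D : (ℕ → ℕ) → ℕ → ℕ := fun f r => fplus f (XiM r) + r + 1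
  have hDmono : ∀ f ∈ Y, Monotone (D f) := by
    intro f _ a b hab
    have h1 : XiM a ≤ XiM b := Finset.sup_mono (Finset.range_subset_range.2 (by omega))
    have h2 : fplus f (XiM a) ≤ fplus f (XiM b) :=
      Finset.sup_mono (Finset.range_subset_range.2 (by omega))
    show fplus f (XiM a) + a + 1 ≤ fplus f (XiM b) + b + 1
    omega
  obtain ⟨u, husm, hugood⟩ := lemA Y hY D hDmono
  have hule : ∀ n, n ≤ u n := fun n => husm.le_apply
  -- stage-two construction
  have exE : ∀ p : ℕ × MS, ∃ e, p.2.1 (nf (p.1+1) - 1) + nf (p.1+1) + 2 ≤ u e :=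
    fun p => ⟨p.2.1 (nf (p.1+1) - 1) + nf (p.1+1) + 2, hule _⟩
  let eI : ℕ × MS → ℕ := fun p => Nat.find (exE p)
  let Vv : ℕ × MS → ℕ := fun p => u (eI p)
  have specE : ∀ p, p.2.1 (nf (p.1+1) - 1) + nf (p.1+1) + 2 ≤ Vv p :=
    fun p => Nat.find_spec (exE p)
  have exJ2 : ∀ p : ℕ × MS, ∃ jj, nf (p.1+1) + 1 ≤ nf jj ∧ Vv p + nf jj < Bv jj := by
    intro p
    refine ⟨max (nf (p.1+1) + 1) (Vv p + 1), ?_, ?_⟩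
    · exact le_trans (le_max_left _ _) (hnself _)
    · have h1 := hBv (max (nf (p.1+1) + 1) (Vv p + 1))
      have h2 : Vv p + 1 ≤ max (nf (p.1+1) + 1) (Vv p + 1) := le_max_right _ _
      omega
  let jN : ℕ × MS → ℕ := fun p => Nat.find (exJ2 p)
  have specJ : ∀ p, nf (p.1+1) + 1 ≤ nf (jN p) ∧ Vv p + nf (jN p) < Bv (jN p) :=
    fun p => Nat.find_spec (exJ2 p)
  let gfun : ℕ × MS → ℕ → ℕ := fun p m =>
    if m < nf (p.1+1) then p.2.1 m
    else if m < nf (jN p) then Vv p + (m - nf (p.1+1))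
    else (qf (jN p + 1)).1 m
  have gmono : ∀ p : ℕ × MS, StrictMono (gfun p) := by
    intro p
    have hq1 : 1 ≤ nf (p.1+1) := le_trans (Nat.succ_le_succ (Nat.zero_le _)) (hnself (p.1+1))
    have hsE := specE p
    obtain ⟨hJ1, hJ2⟩ := specJ p
    apply strictMono_nat_of_lt_succ
    intro m
    show gfun p m < gfun p (m+1)
    by_cases h1 : m + 1 < nf (p.1+1)
    · have e1 : gfun p m = p.2.1 m := if_pos (by omega)
      have e2 : gfun p (m+1) = p.2.1 (m+1) := if_pos h1
      rw [e1, e2]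
      exact p.2.2 (Nat.lt_succ_self m)
    · by_cases h2 : m < nf (p.1+1)
      · have e1 : gfun p m = p.2.1 m := if_pos h2
        have e2 : gfun p (m+1) = Vv p + (m + 1 - nf (p.1+1)) := by
          show (if m + 1 < nf (p.1+1) then p.2.1 (m+1)
            else if m + 1 < nf (jN p) then Vv p + (m + 1 - nf (p.1+1))
            else (qf (jN p + 1)).1 (m+1)) = _
          rw [if_neg h1, if_pos (by omega)]
        rw [e1, e2]
        have hle : p.2.1 m ≤ p.2.1 (nf (p.1+1) - 1) := p.2.2.monotone (by omega)
        omega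
      · by_cases h3 : m + 1 < nf (jN p)
        · have e1 : gfun p m = Vv p + (m - nf (p.1+1)) := by
            show (if m < nf (p.1+1) then p.2.1 m
              else if m < nf (jN p) then Vv p + (m - nf (p.1+1))
              else (qf (jN p + 1)).1 m) = _
            rw [if_neg h2, if_pos (by omega)]
          have e2 : gfun p (m+1) = Vv p + (m + 1 - nf (p.1+1)) := by
            show (if m + 1 < nf (p.1+1) then p.2.1 (m+1)
              else if m + 1 < nf (jN p) then Vv p + (m + 1 - nf (p.1+1))
              else (qf (jN p + 1)).1 (m+1)) = _
            rw [if_neg h1, if_pos h3]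
          rw [e1, e2]
          omega
        · by_cases h4 : m < nf (jN p)
          · have e1 : gfun p m = Vv p + (m - nf (p.1+1)) := by
              show (if m < nf (p.1+1) then p.2.1 m
                else if m < nf (jN p) then Vv p + (m - nf (p.1+1))
                else (qf (jN p + 1)).1 m) = _
              rw [if_neg h2, if_pos h4]
            have e2 : gfun p (m+1) = (qf (jN p + 1)).1 (m+1) := by
              show (if m + 1 < nf (p.1+1) then p.2.1 (m+1)
                else if m + 1 < nf (jN p) then Vv p + (m + 1 - nf (p.1+1))
                else (qf (jN p + 1)).1 (m+1)) = _
              rw [if_neg h1, if_neg h3]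
            rw [e1, e2]
            have hBm : Bv (jN p) ≤ (qf (jN p + 1)).1 (m+1) :=
              (qf (jN p + 1)).2.monotone (by omega)
            omega
          · have e1 : gfun p m = (qf (jN p + 1)).1 m := by
              show (if m < nf (p.1+1) then p.2.1 m
                else if m < nf (jN p) then Vv p + (m - nf (p.1+1))
                else (qf (jN p + 1)).1 m) = _
              rw [if_neg h2, if_neg h4]
            have e2 : gfun p (m+1) = (qf (jN p + 1)).1 (m+1) := by
              show (if m + 1 < nf (p.1+1) then p.2.1 (m+1)
                else if m + 1 < nf (jN p) then Vv p + (m + 1 - nf (p.1+1))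
                else (qf (jN p + 1)).1 (m+1)) = _
              rw [if_neg h1, if_neg h3]
            rw [e1, e2]
            exact (qf (jN p + 1)).2 (Nat.lt_succ_self m)
  let gstep : ℕ × MS → ℕ × MS := fun p => (jN p, ⟨gfun p, gmono p⟩)
  let gst : ℕ → ℕ × MS := fun i => Nat.rec (0, qf 1) (fun _ p => gstep p) i
  have gs0 : gst 0 = (0, qf 1) := rfl
  have gs_succ1 : ∀ i, (gst (i+1)).1 = jN (gst i) := fun i => rfl
  have gs_succ2 : ∀ i, (gst (i+1)).2.1 = gfun (gst i) := fun i => rfl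
  let Qq : ℕ → ℕ := fun i => nf ((gst i).1 + 1)
  have g2 : ∀ i m, m < Qq i → (gst (i+1)).2.1 m = (gst i).2.1 m := by
    intro i m hm
    rw [gs_succ2 i]
    exact if_pos hm
  have g3 : ∀ i, (gst (i+1)).2.1 (Qq i) = Vv (gst i) := by
    intro i
    rw [gs_succ2 i]
    have h1 := (specJ (gst i)).1
    have hQd : Qq i = nf ((gst i).1 + 1) := rfl
    have e : gfun (gst i) (Qq i) = Vv (gst i) + (Qq i - Qq i) := by
      show (if Qq i < nf ((gst i).1+1) then (gst i).2.1 (Qq i)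
        else if Qq i < nf (jN (gst i)) then Vv (gst i) + (Qq i - nf ((gst i).1+1))
        else (qf (jN (gst i) + 1)).1 (Qq i)) = _
      rw [if_neg (lt_irrefl _), if_pos (by omega)]
    rw [e, Nat.sub_self, Nat.add_zero]
  have g4 : ∀ i m, nf ((gst (i+1)).1) ≤ m →
      (gst (i+1)).2.1 m = (qf ((gst (i+1)).1 + 1)).1 m := by
    intro i m hm
    rw [gs_succ2 i, gs_succ1 i]
    rw [gs_succ1 i] at hm
    have h1 := (specJ (gst i)).1
    show (if m < nf ((gst i).1+1) then (gst i).2.1 m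
      else if m < nf (jN (gst i)) then Vv (gst i) + (m - nf ((gst i).1+1))
      else (qf (jN (gst i) + 1)).1 m) = _
    rw [if_neg (by omega), if_neg (by omega)]
  have jlt : ∀ i, (gst i).1 + 1 < (gst (i+1)).1 := by
    intro i
    have h1 := (specJ (gst i)).1
    have h2 : nf ((gst i).1 + 1) < nf (jN (gst i)) := by omega
    have h3 := hnsm.lt_iff_lt.1 h2
    rw [gs_succ1 i]
    exact h3
  have jge : ∀ i, i ≤ (gst i).1 := by
    intro i
    induction i with
    | zero => exact Nat.zero_le _
    | succ i ih =>
      have := jlt i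
      omega
  have QSM : StrictMono Qq := by
    apply strictMono_nat_of_lt_succ
    intro i
    exact hnsm (by have := jlt i; omega)
  have Qge : ∀ i, i + 1 ≤ Qq i := fun i =>
    le_trans (by have := jge i; omega) (hnself ((gst i).1 + 1))
  have coh : ∀ i l, i ≤ l → ∀ m, m < Qq i → (gst l).2.1 m = (gst i).2.1 m := by
    intro i l hil
    induction l, hil using Nat.le_induction with
    | base => intro m _; rfl
    | succ l hil ih =>
      intro m hm
      have h1 : m < Qq l := lt_of_lt_of_le hm (QSM.monotone hil)
      rw [g2 l m h1]
      exact ih m hm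
  let gl : ℕ → ℕ := fun m => (gst m).2.1 m
  have g9 : ∀ i m, m < Qq i → gl m = (gst i).2.1 m := by
    intro i m hm
    rcases le_total m i with h | h
    · exact (coh m i h m (by have := Qge m; omega)).symm
    · exact coh i m h m hm
  have glsm : StrictMono gl := by
    apply strictMono_nat_of_lt_succ
    intro m
    have e1 : gl m = (gst (m+1)).2.1 m := g9 (m+1) m (by have := Qge (m+1); omega)
    have e2 : gl (m+1) = (gst (m+1)).2.1 (m+1) := g9 (m+1) (m+1) (by have := Qge (m+1); omega)
    rw [e1, e2]
    exact (gst (m+1)).2.2 (Nat.lt_succ_self m)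
  have g11 : ∀ i, gl (Qq i) = Vv (gst i) := by
    intro i
    rw [g9 (i+1) (Qq i) (QSM (Nat.lt_succ_self i))]
    exact g3 i
  have g12 : ∀ i m, nf ((gst i).1) ≤ m → m < Qq i → gl m = (qf ((gst i).1 + 1)).1 m := by
    intro i m hm1 hm2
    cases i with
    | zero => exact g9 0 m hm2
    | succ i =>
      rw [g9 (i+1) m hm2]
      exact g4 i m hm1
  have eelt : ∀ i, eI (gst i) < eI (gst (i+1)) := by
    intro i
    have h0 := specE (gst (i+1))
    have hQ : nf ((gst (i+1)).1) + 1 ≤ nf ((gst (i+1)).1 + 1) :=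
      hnsm (Nat.lt_succ_self _)
    have h2 : (gst (i+1)).2.1 (nf ((gst (i+1)).1)) ≤
        (gst (i+1)).2.1 (nf ((gst (i+1)).1 + 1) - 1) :=
      (gst (i+1)).2.2.monotone (by omega)
    have h3 : (gst (i+1)).2.1 (nf ((gst (i+1)).1)) = Bv ((gst (i+1)).1) :=
      g4 i (nf ((gst (i+1)).1)) (le_refl _)
    have h4 := (specJ (gst i)).2
    rw [← gs_succ1 i] at h4
    have h5 : Vv (gst i) < Vv (gst (i+1)) := by omega
    exact husm.lt_iff_lt.1 h5
  have eIsm : StrictMono (fun i => eI (gst i)) := strictMono_nat_of_lt_succ eelt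
  set gMS : MS := ⟨gl, glsm⟩ with hgMS
  -- g avoids every A k
  have hnotin : ∀ i, gMS ∉ Gk ((gst i).1) := by
    intro i
    apply hdodge ((gst i).1) gMS
    · intro m hm1 hm2
      exact g12 i m hm1 hm2
    · intro m hm
      have h1 : gl m < gl (nf ((gst i).1)) := glsm hm
      have h2 : gl (nf ((gst i).1)) = (qf ((gst i).1 + 1)).1 (nf ((gst i).1)) :=
        g12 i (nf ((gst i).1)) (le_refl _) (hnsm (Nat.lt_succ_self _))
      show gl m < Bv ((gst i).1)
      have h3 : Bv ((gst i).1) = gl (nf ((gst i).1)) := h2.symm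
      omega
  -- largeness
  have hlarge : ∀ f ∈ Y, {n | f n ≤ gl n}.Infinite := by
    intro f hf
    apply Set.infinite_of_not_bddAbove
    rintro ⟨b, hb⟩
    obtain ⟨k, hkK, hkD⟩ := hugood f hf (max (eI (gst 0)) (gl (b+1)))
    have hexstage : ∃ i, k + 1 ≤ eI (gst i) :=
      ⟨k + 1, eIsm.le_apply⟩
    have hspec : k + 1 ≤ eI (gst (Nat.find hexstage)) := Nat.find_spec hexstage
    have hi0pos : Nat.find hexstage ≠ 0 := by
      intro h0
      rw [h0] at hspec
      have : eI (gst 0) ≤ k := le_trans (le_max_left _ _) hkK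
      omega
    obtain ⟨i1, hi1⟩ := Nat.exists_eq_succ_of_ne_zero hi0pos
    have hprev : eI (gst i1) ≤ k := by
      have := Nat.find_min hexstage (by omega : i1 < Nat.find hexstage)
      omega
    rw [hi1] at hspec
    -- the serving position
    have hval : u (k+1) ≤ gl (Qq (i1+1)) := by
      rw [g11 (i1+1)]
      exact husm.monotone hspec
    have hjb : jN (gst i1) ≤ Jf (Vv (gst i1)) := by
      apply Nat.find_min'
      have hsp := Jf_spec (Vv (gst i1))
      have hsE := specE (gst i1)
      exact ⟨by omega, hsp.2⟩
    have hpos : Qq (i1+1) ≤ XiM (u k) := by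
      have h1 : Qq (i1+1) = nf (jN (gst i1) + 1) := by
        show nf ((gst (i1+1)).1 + 1) = _
        rw [gs_succ1 i1]
      have h2 : nf (jN (gst i1) + 1) ≤ Xi (Vv (gst i1)) :=
        hnsm.monotone (by omega)
      have h3 : Vv (gst i1) ≤ u k := husm.monotone hprev
      have h4 : Xi (Vv (gst i1)) ≤ XiM (u k) := XiM_ge _ _ h3
      omega
    have hmem : Qq (i1+1) ∈ {n | f n ≤ gl n} := by
      have h1 : f (Qq (i1+1)) ≤ fplus f (XiM (u k)) := fplus_ge f _ _ hpos
      have h2 : fplus f (XiM (u k)) ≤ D f (u k) := by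
        show fplus f (XiM (u k)) ≤ fplus f (XiM (u k)) + u k + 1
        omega
      have h3 : D f (u k) ≤ u (k+1) := hkD
      show f (Qq (i1+1)) ≤ gl (Qq (i1+1))
      omega
    have hQb : Qq (i1+1) ≤ b := hb hmem
    have hglb : gl (b+1) ≤ k := le_trans (le_max_right _ _) hkK
    have hgt : gl (b+1) < gl (Qq (i1+1)) := by
      have : k + 1 ≤ u (k+1) := hule (k+1)
      omega
    have hlt : b + 1 < Qq (i1+1) := glsm.lt_iff_lt.1 hgt
    omega
  -- contradiction
  have hgS : gMS ∈ {g : MS | ∀ f ∈ Y, {n | f n ≤ g.val n}.Infinite} := hlarge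
  obtain ⟨k, hk⟩ := mem_iUnion.1 (hsubA hgS)
  exact hnotin k (hGmono k ((gst k).1) (jge k) hk)
end

section
/- Let Y_1, …, Y_k be ≤*-unbounded subsets of the increasing functions ℕ → ℕ and g ∈ ℕ^ℕ. Then there exist f_i ∈ Y_i (i = 1, …, k) such that the set {n : g(n) < min(f_1(n), …, f_k(n))} is infinite. -/
open Set Filter Cardinal

/- Otherwise `g ∘ a`, where `a n ∈ A` and `n < a n`, bounds `Y`: by monotonicity
`f n ≤ f (a n) ≤ g (a n)` for large `n`. -/
lemma exists_mem_infinite_setOf_lt_of_unbounded {Y : Set (ℕ → ℕ)}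
    (hmono : ∀ f ∈ Y, Monotone f) (hunb : ¬ ∃ g : ℕ → ℕ, ∀ f ∈ Y, EvLe f g)
    (g : ℕ → ℕ) {A : Set ℕ} (hA : A.Infinite) :
    ∃ f ∈ Y, {n ∈ A | g n < f n}.Infinite := by
  by_contra! hfin
  choose a haA hna using fun n => hA.exists_gt n
  refine hunb ⟨g ∘ a, fun f hf => ?_⟩
  have ha : Tendsto a atTop atTop := tendsto_atTop_mono (fun n => (hna n).le) tendsto_id
  have hexc : ∀ᶠ n in atTop, n ∉ {m ∈ A | g m < f m} := by
    simpa [← Nat.cofinite_eq_atTop] using (hfin f hf).compl_mem_cofinite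
  filter_upwards [ha.eventually hexc] with n hn
  have hle : f (a n) ≤ g (a n) := not_lt.mp fun hlt => hn ⟨haA n, hlt⟩
  exact ((hmono f hf) (hna n).le).trans hle

lemma exists_forall_mem_infinite_setOf_forall_lt_of_unbounded {k : ℕ} {Y : Fin k → Set (ℕ → ℕ)}
    (hmono : ∀ i, ∀ f ∈ Y i, Monotone f) (hunb : ∀ i, ¬ ∃ g : ℕ → ℕ, ∀ f ∈ Y i, EvLe f g)
    (g : ℕ → ℕ) {A : Set ℕ} (hA : A.Infinite) :
    ∃ f : Fin k → ℕ → ℕ, (∀ i, f i ∈ Y i) ∧ {n ∈ A | ∀ i, g n < f i n}.Infinite := by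
  induction k generalizing A with
  | zero => exact ⟨finZeroElim, finZeroElim, by simpa using hA⟩
  | succ k ih =>
    obtain ⟨f₀, hf₀, hA₀⟩ := exists_mem_infinite_setOf_lt_of_unbounded (hmono 0) (hunb 0) g hA
    obtain ⟨f, hf, hinf⟩ := ih (fun i => hmono i.succ) (fun i => hunb i.succ) hA₀
    refine ⟨Fin.cons f₀ f, Fin.cases hf₀ hf, hinf.mono ?_⟩
    rintro n ⟨⟨hnA, hlt₀⟩, hlt⟩
    exact ⟨hnA, Fin.cases hlt₀ hlt⟩

/-- given `≤*`-unbounded sets `Y₁, …, Y_k` of increasing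
functions and any `g`, one can pick `fᵢ ∈ Yᵢ` so that
`{n : g(n) < min(f₁(n), …, f_k(n))}` is infinite. -/
theorem stmt_16 (k : ℕ) (Y : Fin k → Set (ℕ → ℕ))
    (hmono : ∀ i, ∀ f ∈ Y i, StrictMono f)
    (hunb : ∀ i, ¬ ∃ g : ℕ → ℕ, ∀ f ∈ Y i, EvLe f g)
    (g : ℕ → ℕ) :
    ∃ f : Fin k → (ℕ → ℕ), (∀ i, f i ∈ Y i) ∧
      {n | ∀ i, g n < f i n}.Infinite := by
  obtain ⟨f, hf, hinf⟩ := exists_forall_mem_infinite_setOf_forall_lt_of_unbounded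
    (fun i f hf => (hmono i f hf).monotone) hunb g infinite_univ
  exact ⟨f, hf, by simpa using hinf⟩
end
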